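/- arXiv:math/0609496 — 4 statements merged into one kernel-verified Lean document; each statement's English description precedes it below -/
import Mathlib

section
/- Let S be a finite nonempty type, P a row-stochastic matrix on S, β a real number with 0 ≤ β < 1, and C, V : S → ℝ. If V ≥ C + β·(P ⬝ V) componentwise, then V ≥ (I − β·P)⁻¹ ⬝ C componentwise; that is, any such V is an upper bound on the discounted value vector of the stationary strategy with transition matrix P and reward C. -/
open Matrix

lemma key_pos {S : Type*} [Fintype S] [Nonempty S]
    (P : Matrix S S ℝ) (hP_nonneg : ∀ s s', 0 ≤ P s s')
    (hP_row : ∀ s, ∑ s', P s s' = 1)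
    (β : ℝ) (hβ0 : 0 ≤ β) (hβ1 : β < 1) (W : S → ℝ)
    (h : ∀ s, β * (P *ᵥ W) s ≤ W s) : ∀ s, 0 ≤ W s := by
  obtain ⟨s0, _, hs0⟩ := Finset.exists_min_image Finset.univ W ⟨Classical.arbitrary S, Finset.mem_univ _⟩
  have hmin : ∀ s, W s0 ≤ W s := fun s => hs0 s (Finset.mem_univ s)
  have hPW : W s0 ≤ (P *ᵥ W) s0 := by
    have : (P *ᵥ W) s0 = ∑ s', P s0 s' * W s' := rfl
    rw [this]
    calc W s0 = ∑ s', P s0 s' * W s0 := by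
          rw [← Finset.sum_mul, hP_row, one_mul]
      _ ≤ ∑ s', P s0 s' * W s' :=
          Finset.sum_le_sum fun s' _ => mul_le_mul_of_nonneg_left (hmin s') (hP_nonneg s0 s')
  have h1 : β * W s0 ≤ W s0 := le_trans (mul_le_mul_of_nonneg_left hPW hβ0) (h s0)
  have h2 : 0 ≤ (1 - β) * W s0 := by nlinarith
  have h3 : 0 ≤ W s0 := nonneg_of_mul_nonneg_right h2 (by linarith)
  exact fun s => le_trans h3 (hmin s)

theorem stmt4 {S : Type*} [Fintype S] [Nonempty S] [DecidableEq S]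
    (P : Matrix S S ℝ) (hP_nonneg : ∀ s s', 0 ≤ P s s')
    (hP_row : ∀ s, ∑ s', P s s' = 1)
    (β : ℝ) (hβ0 : 0 ≤ β) (hβ1 : β < 1) (C V : S → ℝ)
    (hV : ∀ s, C s + β * (P *ᵥ V) s ≤ V s) :
    ∀ s, ((((1 : Matrix S S ℝ) - β • P)⁻¹) *ᵥ C) s ≤ V s := by
  set A : Matrix S S ℝ := (1 : Matrix S S ℝ) - β • P with hA
  have hAv : ∀ x : S → ℝ, A *ᵥ x = x - β • (P *ᵥ x) := by
    intro x
    simp [hA, sub_mulVec, smul_mulVec]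
  -- A is invertible
  have hdet : A.det ≠ 0 := by
    intro hd
    obtain ⟨v, hv0, hv⟩ := (Matrix.exists_mulVec_eq_zero_iff).2 hd
    have hv' : ∀ s, v s = β * (P *ᵥ v) s := by
      intro s
      have := congrFun (hAv v) s
      rw [hv] at this
      simp at this
      linarith [this]
    have hpos : ∀ s, 0 ≤ v s := key_pos P hP_nonneg hP_row β hβ0 hβ1 v
      (fun s => le_of_eq (hv' s).symm)
    have hneg : ∀ s, 0 ≤ -v s := by
      apply key_pos P hP_nonneg hP_row β hβ0 hβ1 (-v)
      intro s
      have : P *ᵥ (-v) = -(P *ᵥ v) := by simp [Matrix.mulVec_neg]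
      rw [this]
      simp only [Pi.neg_apply]
      linarith [hv' s]
    apply hv0
    funext s
    have h1 := hpos s
    have h2 := hneg s
    have : v s = 0 := le_antisymm (by linarith) h1
    simpa using this
  have hunit : IsUnit A.det := isUnit_iff_ne_zero.2 hdet
  have hAAinv : A * A⁻¹ = 1 := Matrix.mul_nonsing_inv A hunit
  set W : S → ℝ := V - A⁻¹ *ᵥ C with hW
  have hAW : A *ᵥ W = A *ᵥ V - C := by
    rw [hW, Matrix.mulVec_sub, Matrix.mulVec_mulVec, hAAinv, Matrix.one_mulVec]
  have hkey : ∀ s, β * (P *ᵥ W) s ≤ W s := by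
    intro s
    have h1 : (A *ᵥ W) s = W s - β * (P *ᵥ W) s := by
      rw [hAv]; simp
    have h2 : (A *ᵥ W) s = (A *ᵥ V) s - C s := by rw [hAW]; simp
    have h3 : (A *ᵥ V) s = V s - β * (P *ᵥ V) s := by rw [hAv]; simp
    have := hV s
    linarith
  have hpos := key_pos P hP_nonneg hP_row β hβ0 hβ1 W hkey
  intro s
  have := hpos s
  simp only [hW, Pi.sub_apply] at this
  linarith
end

section
/- The discounted optimality equation has a unique solution: there exists a unique V* : S → ℝ such that V* s = max_{a ∈ A} (C s a + β·∑_{s'} p s a s' · V* s') for every state s, i.e., the Bellman operator T has a unique fixed point. -/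
theorem stmt7 {S A : Type*} [Fintype S] [Fintype A] [Nonempty S] [Nonempty A]
    (C : S → A → ℝ) (p : S → A → S → ℝ)
    (hp_nonneg : ∀ s a s', 0 ≤ p s a s') (hp_row : ∀ s a, ∑ s', p s a s' = 1)
    (β : ℝ) (hβ0 : 0 ≤ β) (hβ1 : β < 1) :
    ∃! Vstar : S → ℝ, ∀ s, Vstar s = Finset.univ.sup' Finset.univ_nonempty
        (fun a : A => C s a + β * ∑ s', p s a s' * Vstar s') := by
  set T : (S → ℝ) → (S → ℝ) := fun V s => Finset.univ.sup' Finset.univ_nonempty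
      (fun a : A => C s a + β * ∑ s', p s a s' * V s') with hT
  have key : ∀ V W : S → ℝ, ∀ s, T V s ≤ T W s + β * dist V W := by
    intro V W s
    apply Finset.sup'_le
    intro a _
    have h1 : ∑ s', p s a s' * V s' ≤ (∑ s', p s a s' * W s') + dist V W := by
      have : ∑ s', p s a s' * V s' - ∑ s', p s a s' * W s'
          = ∑ s', p s a s' * (V s' - W s') := by
        rw [← Finset.sum_sub_distrib]; exact Finset.sum_congr rfl fun x _ => (mul_sub _ _ _).symm
      have hb : ∑ s', p s a s' * (V s' - W s') ≤ ∑ s', p s a s' * dist V W := by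
        apply Finset.sum_le_sum
        intro s' _
        apply mul_le_mul_of_nonneg_left _ (hp_nonneg s a s')
        calc V s' - W s' ≤ |V s' - W s'| := le_abs_self _
          _ = dist (V s') (W s') := (Real.dist_eq _ _).symm
          _ ≤ dist V W := dist_le_pi_dist V W s'
      rw [← Finset.sum_mul, hp_row, one_mul] at hb
      linarith [this ▸ hb]
    have h2 : C s a + β * ∑ s', p s a s' * W s' ≤ T W s :=
      Finset.le_sup' (fun a : A => C s a + β * ∑ s', p s a s' * W s')
        (Finset.mem_univ a)
    nlinarith [mul_le_mul_of_nonneg_left h1 hβ0]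
  set K : NNReal := ⟨β, hβ0⟩ with hK
  have hcontr : ContractingWith K T := by
    constructor
    · exact_mod_cast hβ1
    · rw [lipschitzWith_iff_dist_le_mul]
      intro V W
      rw [dist_pi_le_iff (by positivity : (0:ℝ) ≤ K * dist V W)]
      intro s
      have hKc : (K:ℝ) = β := rfl
      rw [Real.dist_eq, abs_sub_le_iff, hKc]
      constructor
      · have := key V W s; simpa using by linarith
      · have := key W V s; rw [dist_comm] at this; simpa using by linarith
  obtain ⟨V, hfix⟩ := hcontr.exists_fixedPoint (Classical.arbitrary _)
    (by simp [edist_ne_top])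
  refine ⟨V, fun s => ?_, fun W hW => ?_⟩
  · exact congrFun hfix.1.symm s
  · have hWfix : Function.IsFixedPt T W := funext fun s => (hW s).symm
    exact hcontr.fixedPoint_unique' hWfix hfix.1
end

section
/- Let V* be the unique fixed point of the Bellman operator T. If V : S → ℝ satisfies V ≥ T V componentwise (equivalently, V s ≥ C s a + β·∑_{s'} p s a s' · V s' for all s and all a), then V ≥ V* componentwise. Consequently, for any strictly positive weights γ : S → ℝ (γ s > 0 for all s), one has ∑_{s} γ s · V s ≥ ∑_{s} γ s · V* s, and V* attains the minimum of ∑_{s} γ s · V s over the set {V | V ≥ T V}; i.e., the optimal discounted value vector is the optimal solution of this linear program. -/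
theorem stmt9 {S A : Type*} [Fintype S] [Fintype A] [Nonempty S] [Nonempty A]
    (C : S → A → ℝ) (p : S → A → S → ℝ)
    (hp_nonneg : ∀ s a s', 0 ≤ p s a s') (hp_row : ∀ s a, ∑ s', p s a s' = 1)
    (β : ℝ) (hβ0 : 0 ≤ β) (hβ1 : β < 1)
    (T : (S → ℝ) → S → ℝ)
    (hT : ∀ V s, T V s = Finset.univ.sup' Finset.univ_nonempty
        (fun a : A => C s a + β * ∑ s', p s a s' * V s'))
    (Vstar : S → ℝ) (hfix : ∀ s, T Vstar s = Vstar s)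
    (V : S → ℝ) (hV : ∀ s, T V s ≤ V s) :
    (∀ s, Vstar s ≤ V s) ∧
    ∀ γ : S → ℝ, (∀ s, 0 < γ s) →
      (∑ s, γ s * Vstar s ≤ ∑ s, γ s * V s) ∧
      IsLeast {x : ℝ | ∃ W : S → ℝ, (∀ s, T W s ≤ W s) ∧ x = ∑ s, γ s * W s}
        (∑ s, γ s * Vstar s) := by
  have key : ∀ W : S → ℝ, (∀ s, T W s ≤ W s) → ∀ s, Vstar s ≤ W s := by
    intro W hW
    set M := Finset.univ.sup' Finset.univ_nonempty (fun s => Vstar s - W s) with hM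
    obtain ⟨s0, -, hs0⟩ := Finset.exists_mem_eq_sup' (Finset.univ_nonempty (α := S))
      (fun s => Vstar s - W s)
    have hMle : ∀ s, Vstar s - W s ≤ M := fun s =>
      Finset.le_sup' (fun s => Vstar s - W s) (Finset.mem_univ s)
    -- pick optimal action at s0 for Vstar
    obtain ⟨a0, -, ha0⟩ := Finset.exists_mem_eq_sup' (Finset.univ_nonempty (α := A))
      (fun a : A => C s0 a + β * ∑ s', p s0 a s' * Vstar s')
    have h1 : Vstar s0 = C s0 a0 + β * ∑ s', p s0 a0 s' * Vstar s' := by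
      rw [← hfix s0, hT]; exact ha0
    have h2 : C s0 a0 + β * ∑ s', p s0 a0 s' * W s' ≤ W s0 := by
      refine le_trans ?_ (hW s0)
      rw [hT]
      exact Finset.le_sup' (fun a : A => C s0 a + β * ∑ s', p s0 a s' * W s') (Finset.mem_univ a0)
    have h3 : (∑ s', p s0 a0 s' * Vstar s') - (∑ s', p s0 a0 s' * W s') ≤ M := by
      rw [← Finset.sum_sub_distrib]
      calc ∑ s', (p s0 a0 s' * Vstar s' - p s0 a0 s' * W s')
          ≤ ∑ s', p s0 a0 s' * M := by
            apply Finset.sum_le_sum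
            intro s' _
            rw [← mul_sub]
            exact mul_le_mul_of_nonneg_left (hMle s') (hp_nonneg s0 a0 s')
        _ = M := by rw [← Finset.sum_mul, hp_row, one_mul]
    have hMβ : M ≤ β * M := by
      have : Vstar s0 - W s0 ≤ β * M := by
        rw [h1]
        nlinarith [h2, h3]
      have e : M = Vstar s0 - W s0 := hM.trans hs0
      linarith
    have hM0 : M ≤ 0 := by nlinarith
    intro s
    have := hMle s
    linarith
  refine ⟨key V hV, fun γ hγ => ?_⟩
  have hsum : ∀ W : S → ℝ, (∀ s, T W s ≤ W s) →
      ∑ s, γ s * Vstar s ≤ ∑ s, γ s * W s := by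
    intro W hW
    apply Finset.sum_le_sum
    intro s _
    exact mul_le_mul_of_nonneg_left (key W hW s) (hγ s).le
  refine ⟨hsum V hV, ⟨Vstar, fun s => (hfix s).le, rfl⟩, ?_⟩
  rintro x ⟨W, hW, rfl⟩
  exact hsum W hW
end

section
/- Finite-horizon dynamic programming (Bellman's principle of optimality): Let S and A be finite nonempty types, T a natural number (the horizon), p : S → A → S → ℝ transition probabilities with p s a s' ≥ 0 and ∑_{s'} p s a s' = 1 for all s, a, and r : ℕ → S → A → ℝ a reward function. Define V : ℕ → S → ℝ by backward induction: V T s = max_{a} r T s a, and V t s = max_{a} (r t s a + ∑_{s'} p s a s' · V (t+1) s') for t < T. For a deterministic Markov policy π : ℕ → S → A and initial state s₀, define the expected total reward J π s₀ = ∑ over all trajectories ω : Fin (T+1) → S with ω 0 = s₀ of (∏_{t=0}^{T−1} p (ω t) (π t (ω t)) (ω (t+1))) · (∑_{t=0}^{T} r t (ω t) (π t (ω t))). Then for every s₀, V 0 s₀ = max over all policies π of J π s₀. -/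
/-!
Conditioning on the first step turns the expected total reward of a policy, a sum over
trajectories, into a backward recursion: the one defining `V` with the maximum over actions replaced
by the action the policy takes. As transition probabilities are nonnegative, backward induction in
time bounds the value of every policy by `V`, and a policy picking a maximising action at every
time and state attains `V`.
-/

open Finset

section MarkovRewardProcess

variable {S : Type*} [Fintype S]

/-- `rewardToGo q g n t s` is the expected reward collected at times `t, …, t + n` by the Markov
chain with transition matrix `q t` at time `t`, started in state `s` at time `t`. -/
noncomputable def rewardToGo (q : ℕ → S → S → ℝ) (g : ℕ → S → ℝ) : ℕ → ℕ → S → ℝ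
  | 0, t, s => g t s
  | n + 1, t, s => g t s + ∑ s', q t s s' * rewardToGo q g n (t + 1) s'

variable [DecidableEq S]

lemma sum_filter_apply_zero_eq_sum_cons {M : Type*} [AddCommMonoid M] (n : ℕ) (s₀ : S)
    (f : (Fin (n + 1) → S) → M) :
    ∑ ω ∈ univ.filter (fun ω : Fin (n + 1) → S => ω 0 = s₀), f ω =
      ∑ τ : Fin n → S, f (Fin.cons s₀ τ) := by
  refine sum_nbij' Fin.tail (fun τ => (Fin.cons s₀ τ : Fin (n + 1) → S))
    (fun _ _ => mem_univ _) (fun _ _ => by simp) ?_ (fun τ _ => Fin.tail_cons _ _) ?_ <;>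
  · intro ω hω
    rw [← (mem_filter.1 hω).2, Fin.cons_self_tail]

lemma sum_filter_apply_zero_succ {M : Type*} [AddCommMonoid M] (n : ℕ) (s₀ : S)
    (f : (Fin (n + 2) → S) → M) :
    ∑ ω ∈ univ.filter (fun ω : Fin (n + 2) → S => ω 0 = s₀), f ω =
      ∑ s', ∑ ω ∈ univ.filter (fun ω : Fin (n + 1) → S => ω 0 = s'), f (Fin.cons s₀ ω) := by
  rw [sum_filter_apply_zero_eq_sum_cons, ← sum_fiberwise univ (fun ω : Fin (n + 1) → S => ω 0)]

/-- The offset `c` is the reward collected before time `t₀`; carrying it makes the induction go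
through without first proving that the path probabilities sum to `1`. -/
theorem sum_paths_eq_rewardToGo (q : ℕ → S → S → ℝ) (g : ℕ → S → ℝ)
    (hq : ∀ t s, ∑ s', q t s s' = 1) (n t₀ : ℕ) (s₀ : S) (c : ℝ) :
    ∑ ω ∈ univ.filter (fun ω : Fin (n + 1) → S => ω 0 = s₀),
      (∏ i : Fin n, q (t₀ + i) (ω i.castSucc) (ω i.succ)) *
        (c + ∑ i : Fin (n + 1), g (t₀ + i) (ω i)) = c + rewardToGo q g n t₀ s₀ := by
  induction n generalizing t₀ s₀ c with
  | zero => simp [sum_filter_apply_zero_eq_sum_cons, rewardToGo]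
  | succ n ih =>
    have split_head : ∀ ω : Fin (n + 1) → S,
        (∏ i : Fin (n + 1), q (t₀ + i) ((Fin.cons s₀ ω : Fin (n + 2) → S) i.castSucc)
            ((Fin.cons s₀ ω : Fin (n + 2) → S) i.succ)) *
          (c + ∑ i : Fin (n + 2), g (t₀ + i) ((Fin.cons s₀ ω : Fin (n + 2) → S) i)) =
        q t₀ s₀ (ω 0) * ((∏ i : Fin n, q (t₀ + 1 + i) (ω i.castSucc) (ω i.succ)) *
          (c + g t₀ s₀ + ∑ i : Fin (n + 1), g (t₀ + 1 + i) (ω i))) := by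
      intro ω
      simp only [Fin.prod_univ_succ, Fin.sum_univ_succ, Fin.castSucc_zero, Fin.cons_zero,
        Fin.cons_succ, ← Fin.succ_castSucc, Fin.val_zero, Fin.val_succ, add_zero,
        ← add_assoc, add_right_comm t₀ 1]
      ring
    calc _ = ∑ s', q t₀ s₀ s' * (c + g t₀ s₀ + rewardToGo q g n (t₀ + 1) s') := by
          rw [sum_filter_apply_zero_succ]
          refine sum_congr rfl fun s' _ => ?_
          rw [← ih, mul_sum]
          exact sum_congr rfl fun ω hω => by rw [split_head, (mem_filter.1 hω).2]
      _ = c + rewardToGo q g (n + 1) t₀ s₀ := by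
          simp only [mul_add, sum_add_distrib, ← sum_mul, hq, one_mul, rewardToGo]
          ring

end MarkovRewardProcess

section FiniteHorizonMDP

variable {S A : Type*} [Fintype S]

noncomputable def policyValue (p : S → A → S → ℝ) (r : ℕ → S → A → ℝ) (π : ℕ → S → A) :
    ℕ → ℕ → S → ℝ :=
  rewardToGo (fun t s s' => p s (π t s) s') (fun t s => r t s (π t s))

variable {T : ℕ} {p : S → A → S → ℝ} {r : ℕ → S → A → ℝ} {V : ℕ → S → ℝ}

theorem policyValue_le_of_bellman_le (hp : ∀ s a s', 0 ≤ p s a s')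
    (hVT : ∀ s a, r T s a ≤ V T s)
    (hVt : ∀ t < T, ∀ s a, r t s a + ∑ s', p s a s' * V (t + 1) s' ≤ V t s)
    (π : ℕ → S → A) (n t : ℕ) (htn : t + n = T) (s : S) :
    policyValue p r π n t s ≤ V t s := by
  induction n generalizing t s with
  | zero =>
    obtain rfl : t = T := htn
    exact hVT s (π t s)
  | succ n ih =>
    calc policyValue p r π (n + 1) t s
        = r t s (π t s) + ∑ s', p s (π t s) s' * policyValue p r π n (t + 1) s' := rfl
      _ ≤ r t s (π t s) + ∑ s', p s (π t s) s' * V (t + 1) s' := by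
          gcongr with s'
          · exact hp _ _ _
          · exact ih (t + 1) (by omega) s'
      _ ≤ V t s := hVt t (by omega) s (π t s)

theorem policyValue_eq_of_bellman_eq {π : ℕ → S → A}
    (hVT : ∀ s, r T s (π T s) = V T s)
    (hVt : ∀ t < T, ∀ s, r t s (π t s) + ∑ s', p s (π t s) s' * V (t + 1) s' = V t s)
    (n t : ℕ) (htn : t + n = T) (s : S) :
    policyValue p r π n t s = V t s := by
  induction n generalizing t s with
  | zero =>
    obtain rfl : t = T := htn
    exact hVT s
  | succ n ih =>
    calc policyValue p r π (n + 1) t s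
        = r t s (π t s) + ∑ s', p s (π t s) s' * policyValue p r π n (t + 1) s' := rfl
      _ = V t s := by
          simp only [ih (t + 1) (by omega)]
          exact hVt t (by omega) s

theorem exists_greedy_policy [Fintype A] [Nonempty A]
    (hVT : ∀ s, V T s = univ.sup' univ_nonempty (fun a : A => r T s a))
    (hVt : ∀ t < T, ∀ s, V t s = univ.sup' univ_nonempty
        (fun a : A => r t s a + ∑ s', p s a s' * V (t + 1) s')) :
    ∃ π : ℕ → S → A, (∀ s, r T s (π T s) = V T s) ∧
      ∀ t < T, ∀ s, r t s (π t s) + ∑ s', p s (π t s) s' * V (t + 1) s' = V t s := by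
  choose aT haT using fun s => exists_mem_eq_sup' univ_nonempty (fun a : A => r T s a)
  choose aC haC using fun t s => exists_mem_eq_sup' univ_nonempty
    (fun a : A => r t s a + ∑ s', p s a s' * V (t + 1) s')
  refine ⟨fun t s => if t < T then aC t s else aT s, fun s => ?_, fun t ht s => ?_⟩
  · simp only [lt_irrefl, if_false, hVT, (haT s).2]
  · simp only [ht, if_true, hVt t ht, (haC t s).2]

end FiniteHorizonMDP

theorem stmt11_general {S A : Type*} [Fintype S] [Fintype A] [Nonempty A]
    [DecidableEq S]
    (T : ℕ) (p : S → A → S → ℝ)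
    (hp_nonneg : ∀ s a s', 0 ≤ p s a s') (hp_row : ∀ s a, ∑ s', p s a s' = 1)
    (r : ℕ → S → A → ℝ)
    (V : ℕ → S → ℝ)
    (hVT : ∀ s, V T s = Finset.univ.sup' Finset.univ_nonempty (fun a : A => r T s a))
    (hVt : ∀ t < T, ∀ s, V t s = Finset.univ.sup' Finset.univ_nonempty
        (fun a : A => r t s a + ∑ s', p s a s' * V (t + 1) s'))
    (J : (ℕ → S → A) → S → ℝ)
    (hJ : ∀ (π : ℕ → S → A) (s₀ : S), J π s₀ =
      ∑ ω ∈ Finset.univ.filter (fun ω : Fin (T + 1) → S => ω 0 = s₀),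
        (∏ t : Fin T, p (ω t.castSucc) (π (t : ℕ) (ω t.castSucc)) (ω t.succ)) *
          (∑ t : Fin (T + 1), r (t : ℕ) (ω t) (π (t : ℕ) (ω t)))) :
    ∀ s₀ : S, IsGreatest {x : ℝ | ∃ π : ℕ → S → A, J π s₀ = x} (V 0 s₀) := by
  intro s₀
  have hJ_eq : ∀ π, J π s₀ = policyValue p r π T 0 s₀ := fun π => by
    simpa [hJ, policyValue] using
      sum_paths_eq_rewardToGo _ (fun t s => r t s (π t s)) (fun t s => hp_row s (π t s)) T 0 s₀ 0
  obtain ⟨πopt, hπT, hπt⟩ := exists_greedy_policy hVT hVt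
  refine ⟨⟨πopt, by rw [hJ_eq, policyValue_eq_of_bellman_eq hπT hπt T 0 (zero_add T)]⟩, ?_⟩
  rintro _ ⟨π, rfl⟩
  rw [hJ_eq]
  refine policyValue_le_of_bellman_le hp_nonneg (fun s a => ?_) (fun t ht s a => ?_) π T 0
    (zero_add T) s₀
  · exact hVT s ▸ le_sup' (fun a : A => r T s a) (mem_univ a)
  · exact hVt t ht s ▸
      le_sup' (fun a : A => r t s a + ∑ s', p s a s' * V (t + 1) s') (mem_univ a)

theorem stmt11 {S A : Type*} [Fintype S] [Fintype A] [Nonempty S] [Nonempty A]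
    [DecidableEq S]
    (T : ℕ) (p : S → A → S → ℝ)
    (hp_nonneg : ∀ s a s', 0 ≤ p s a s') (hp_row : ∀ s a, ∑ s', p s a s' = 1)
    (r : ℕ → S → A → ℝ)
    (V : ℕ → S → ℝ)
    (hVT : ∀ s, V T s = Finset.univ.sup' Finset.univ_nonempty (fun a : A => r T s a))
    (hVt : ∀ t < T, ∀ s, V t s = Finset.univ.sup' Finset.univ_nonempty
        (fun a : A => r t s a + ∑ s', p s a s' * V (t + 1) s'))
    (J : (ℕ → S → A) → S → ℝ)
    (hJ : ∀ (π : ℕ → S → A) (s₀ : S), J π s₀ =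
      ∑ ω ∈ Finset.univ.filter (fun ω : Fin (T + 1) → S => ω 0 = s₀),
        (∏ t : Fin T, p (ω t.castSucc) (π (t : ℕ) (ω t.castSucc)) (ω t.succ)) *
          (∑ t : Fin (T + 1), r (t : ℕ) (ω t) (π (t : ℕ) (ω t)))) :
    ∀ s₀ : S, IsGreatest {x : ℝ | ∃ π : ℕ → S → A, J π s₀ = x} (V 0 s₀) :=
  stmt11_general T p hp_nonneg hp_row r V hVT hVt J hJ
end
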